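/- arXiv:1302.4385 — 8 statements merged into one kernel-verified Lean document; each statement's English description precedes it below -/
import Mathlib

section
/- A nonnegative matrix M ∈ ℝ^{m×n} is r-separable (i.e., M = W[I_r, H']Π for some nonnegative W, H' and permutation matrix Π) if and only if there exists a nonnegative n×n matrix X with exactly n−r zero rows such that M = MX and the r×r submatrix of X indexed by the nonzero rows and the corresponding columns is the identity matrix. -/
/-- A nonnegative matrix `M ∈ ℝ^{m×n}` is `r`-separable
(`M = W[I_r, H']Π` for nonnegative `W, H'` and a column permutation, i.e. the
columns of `M`, suitably reindexed, are `[W, WH']`) if and only if there is a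
nonnegative `n×n` matrix `X` with exactly `n - r` zero rows (the rows outside a
set `S` of `r` indices vanish) such that `M = MX` and the `r×r` submatrix of `X`
indexed by `S × S` is the identity. -/
theorem stmt0 {m n r : ℕ} (hr : r ≤ n) (M : Matrix (Fin m) (Fin n) ℝ)
    (hM : ∀ i j, 0 ≤ M i j) :
    (∃ (W : Matrix (Fin m) (Fin r) ℝ) (H' : Matrix (Fin r) (Fin (n - r)) ℝ)
       (σ : Fin n ≃ Fin r ⊕ Fin (n - r)),
       (∀ i k, 0 ≤ W i k) ∧ (∀ k j, 0 ≤ H' k j) ∧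
       M = (Matrix.fromCols W (W * H')).submatrix id σ) ↔
    (∃ (X : Matrix (Fin n) (Fin n) ℝ) (S : Finset (Fin n)),
       (∀ i j, 0 ≤ X i j) ∧ S.card = r ∧ M = M * X ∧
       (∀ i, i ∉ S → ∀ j, X i j = 0) ∧
       (∀ i, i ∈ S → ∀ j, j ∈ S → X i j = if i = j then 1 else 0)) := by
  classical
  constructor
  · rintro ⟨W, H', σ, hW, hH', hM'⟩
    refine ⟨fun i j => Sum.elim
        (fun k => Sum.elim (fun k' => if k = k' then (1:ℝ) else 0)
          (fun j' => H' k j') (σ j))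
        (fun _ => 0) (σ i),
      Finset.univ.filter (fun i => (σ i).isLeft), ?_, ?_, ?_, ?_, ?_⟩
    · intro i j
      rcases hσi : σ i with k | k
      · rcases hσj : σ j with k' | j'
        · simp only [hσi, hσj, Sum.elim_inl]
          split <;> norm_num
        · simp only [hσi, hσj, Sum.elim_inl, Sum.elim_inr]
          exact hH' k j'
      · simp [hσi]
    · have himg : (Finset.univ.filter (fun i => (σ i).isLeft)) =
          Finset.univ.image (fun k : Fin r => σ.symm (Sum.inl k)) := by
        ext i
        simp only [Finset.mem_filter, Finset.mem_univ, true_and, Finset.mem_image]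
        constructor
        · intro h
          rcases hσi : σ i with k | k
          · exact ⟨k, by rw [← hσi, Equiv.symm_apply_apply]⟩
          · rw [hσi] at h; simp at h
        · rintro ⟨k, rfl⟩; simp
      rw [himg, Finset.card_image_of_injective _
        (fun a b hab => Sum.inl_injective (σ.symm.injective hab)),
        Finset.card_univ, Fintype.card_fin]
    · ext i j
      erw [Matrix.mul_apply]
      rw [← Equiv.sum_comp σ.symm
        (fun l => M i l * Sum.elim
          (fun k => Sum.elim (fun k' => if k = k' then (1:ℝ) else 0)
            (fun j' => H' k j') (σ j))
          (fun _ => 0) (σ l)), Fintype.sum_sum_type]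
      have hMapp : ∀ l, M i l = Matrix.fromCols W (W * H') i (σ l) := by
        intro l; rw [hM']; rfl
      rcases hσj : σ j with k' | j'
      · have : M i j = W i k' := by
          rw [hMapp j, hσj]; rfl
        rw [this]
        simp only [Equiv.apply_symm_apply, hσj, Sum.elim_inl, Sum.elim_inr,
          mul_zero, Finset.sum_const_zero, add_zero]
        rw [Finset.sum_congr rfl (fun k _ => by rw [hMapp, Equiv.apply_symm_apply])]
        simp [Matrix.fromCols, mul_ite]
      · have : M i j = (W * H') i j' := by
          rw [hMapp j, hσj]; rfl
        rw [this]
        simp only [Equiv.apply_symm_apply, hσj, Sum.elim_inl, Sum.elim_inr,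
          mul_zero, Finset.sum_const_zero, add_zero]
        rw [Finset.sum_congr rfl (fun k _ => by rw [hMapp, Equiv.apply_symm_apply])]
        simp [Matrix.fromCols, Matrix.mul_apply]
    · intro i hi j
      rcases hσi : σ i with k | k
      · exfalso; apply hi; simp [hσi]
      · simp [hσi]
    · intro i hi j hj
      simp only [Finset.mem_filter, Finset.mem_univ, true_and] at hi hj
      rcases hσi : σ i with k | k
      swap
      · rw [hσi] at hi; simp at hi
      rcases hσj : σ j with k' | k'
      swap
      · rw [hσj] at hj; simp at hj
      simp only [hσi, hσj, Sum.elim_inl]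
      by_cases h : i = j
      · subst h
        rw [if_pos (Sum.inl_injective (hσi.symm.trans hσj)), if_pos rfl]
      · rw [if_neg h, if_neg (fun hk => h (σ.injective (by rw [hσi, hσj, hk])))]
  · rintro ⟨X, S, hX, hcard, hMX, hzero, hid⟩
    have hcardc : Sᶜ.card = n - r := by
      rw [Finset.card_compl, hcard, Fintype.card_fin]
    let eS : {x : Fin n // x ∈ S} ≃ Fin r := S.equivFin.trans (finCongr hcard)
    let eSc : {x : Fin n // x ∉ S} ≃ Fin (n - r) :=
      ((Equiv.subtypeEquivRight (fun x => (Finset.mem_compl).symm)).trans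
        Sᶜ.equivFin).trans (finCongr hcardc)
    let σ : Fin n ≃ Fin r ⊕ Fin (n - r) :=
      (Equiv.sumCompl (fun x => x ∈ S)).symm.trans (Equiv.sumCongr eS eSc)
    have hmemS : ∀ k : Fin r, σ.symm (Sum.inl k) ∈ S := by
      intro k
      simp only [σ, Equiv.symm_trans_apply, Equiv.sumCongr_symm, Equiv.sumCongr_apply,
        Sum.map_inl, Equiv.symm_symm, Equiv.sumCompl_apply_inl]
      exact (eS.symm k).2
    have hnotS : ∀ j' : Fin (n - r), σ.symm (Sum.inr j') ∉ S := by
      intro j'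
      simp only [σ, Equiv.symm_trans_apply, Equiv.sumCongr_symm, Equiv.sumCongr_apply,
        Sum.map_inr, Equiv.symm_symm, Equiv.sumCompl_apply_inr]
      exact (eSc.symm j').2
    refine ⟨fun i k => M i (σ.symm (Sum.inl k)),
      fun k j' => X (σ.symm (Sum.inl k)) (σ.symm (Sum.inr j')), σ,
      fun i k => hM _ _, fun k j' => hX _ _, ?_⟩
    ext i j
    simp only [Matrix.submatrix_apply, id]
    rcases hσj : σ j with k' | j'
    · have hj : j = σ.symm (Sum.inl k') := by rw [← hσj, Equiv.symm_apply_apply]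
      rw [hj]; rfl
    · have hj : j = σ.symm (Sum.inr j') := by rw [← hσj, Equiv.symm_apply_apply]
      have : M i j = ∑ l, M i l * X l j := by
        conv_lhs => rw [hMX]
        rw [Matrix.mul_apply]
      rw [this, ← Equiv.sum_comp σ.symm (fun l => M i l * X l j), Fintype.sum_sum_type]
      have h2 : ∑ x : Fin (n - r), M i (σ.symm (Sum.inr x)) * X (σ.symm (Sum.inr x)) j = 0 := by
        apply Finset.sum_eq_zero
        intro x _
        rw [hzero _ (hnotS x), mul_zero]
      rw [h2, add_zero, hj]
      simp [Matrix.fromCols, Matrix.mul_apply]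
      rfl
end

section
/- Let W ∈ ℝ^{m×r}_+ have columns with unit ℓ1 norm and be κ-robustly conical. Then for any k ∈ {1,…,r} and any nonnegative vector h ∈ ℝ^r_+ with max_i h(i) ≤ β ≤ 1, one has ‖W(:,k) − Wh‖_1 ≥ (1−β)κ. -/
/-- If `W ∈ ℝ^{m×r}_+` has columns of unit ℓ1 norm and is
`κ`-robustly conical (each column is at ℓ1 distance at least `κ` from the cone
generated by the other columns), then for any `k` and any nonnegative `h` with
entries at most `β ≤ 1`, `‖W(:,k) − Wh‖₁ ≥ (1−β)κ`. -/
theorem stmt1 {m r : ℕ} (W : Matrix (Fin m) (Fin r) ℝ) (κ β : ℝ)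
    (hW : ∀ i k, 0 ≤ W i k) (hcol : ∀ k, ∑ i, W i k = 1)
    (hκ : ∀ (k : Fin r) (x : Fin r → ℝ), (∀ l, 0 ≤ x l) → x k = 0 →
      κ ≤ ∑ i, |W i k - ∑ l, W i l * x l|)
    (k : Fin r) (h : Fin r → ℝ) (hh : ∀ l, 0 ≤ h l)
    (hβ : ∀ l, h l ≤ β) (hβ1 : β ≤ 1) :
    (1 - β) * κ ≤ ∑ i, |W i k - ∑ l, W i l * h l| := by
  have hsum_nonneg : 0 ≤ ∑ i, |W i k - ∑ l, W i l * h l| :=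
    Finset.sum_nonneg fun i _ => abs_nonneg _
  rcases le_or_gt κ 0 with hκ0 | hκ0
  · have : (1 - β) * κ ≤ 0 := mul_nonpos_of_nonneg_of_nonpos (by linarith) hκ0
    linarith
  · have hk1 : h k ≤ 1 := le_trans (hβ k) hβ1
    set c : ℝ := 1 - h k with hc_def
    rcases eq_or_lt_of_le (by linarith : (0:ℝ) ≤ c) with hc0 | hc0
    · -- c = 0, so h k = 1, β = 1
      have hβeq : β = 1 := le_antisymm hβ1 (by have := hβ k; linarith)
      rw [hβeq]
      simpa using hsum_nonneg
    · -- main case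
      set x : Fin r → ℝ := fun l => if l = k then 0 else h l / c with hx_def
      have hxnn : ∀ l, 0 ≤ x l := by
        intro l
        simp only [hx_def]
        split
        · exact le_refl 0
        · exact div_nonneg (hh l) hc0.le
      have hxk : x k = 0 := by simp [hx_def]
      have hκx := hκ k x hxnn hxk
      have key : ∀ i, c * (W i k - ∑ l, W i l * x l) = W i k - ∑ l, W i l * h l := by
        intro i
        have hterm : ∀ l ∈ Finset.univ, W i l * (c * x l)
            = W i l * h l - (if l = k then W i k * h k else 0) := by
          intro l _
          by_cases hl : l = k
          · subst hl; simp [hx_def]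
          · simp only [hx_def, if_neg hl]
            field_simp
            simp
        have hsum : ∑ l, W i l * (c * x l) = ∑ l, W i l * h l - W i k * h k := by
          rw [Finset.sum_congr rfl hterm, Finset.sum_sub_distrib]
          simp
        have : c * ∑ l, W i l * x l = ∑ l, W i l * (c * x l) := by
          rw [Finset.mul_sum]; congr 1; ext l; ring
        rw [mul_sub, this, hsum, hc_def]; ring
      have hrewrite : ∑ i, |W i k - ∑ l, W i l * h l|
          = c * ∑ i, |W i k - ∑ l, W i l * x l| := by
        rw [Finset.mul_sum]
        refine Finset.sum_congr rfl fun i _ => ?_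
        rw [← key i, abs_mul, abs_of_pos hc0]
      rw [hrewrite]
      have h1 : (1 - β) ≤ c := by have := hβ k; simp [hc_def]; linarith
      calc (1 - β) * κ ≤ c * κ := by nlinarith
        _ ≤ c * ∑ i, |W i k - ∑ l, W i l * x l| := by nlinarith
end

section
/- Suppose M̃ = M + N where every column of M has unit ℓ1 norm and ‖N‖_1 ≤ ε < 1 (‖·‖_1 denoting the maximum column ℓ1 norm). If X ∈ ℝ^{n×n}_+ satisfies ‖M̃ − M̃X‖_1 ≤ ρε, then ‖X‖_1 ≤ 1 + ε(ρ+2)/(1−ε) and ‖M − MX‖_1 ≤ ε(ρ+2)/(1−ε). -/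
/-- Lemma 1: If `M̃ = M + N`, the columns of the nonnegative
matrix `M` have unit ℓ1 norm, `‖N‖₁ ≤ ε < 1` (max column ℓ1 norm), and the
nonnegative matrix `X` satisfies `‖M̃ − M̃X‖₁ ≤ ρε`, then
`‖X‖₁ ≤ 1 + ε(ρ+2)/(1−ε)` and `‖M − MX‖₁ ≤ ε(ρ+2)/(1−ε)`. -/
theorem stmt3 {m n : ℕ} (M N : Matrix (Fin m) (Fin n) ℝ)
    (X : Matrix (Fin n) (Fin n) ℝ) (ε ρ : ℝ)
    (hρ : 0 < ρ) (hε0 : 0 ≤ ε) (hε : ε < 1)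
    (hM0 : ∀ i j, 0 ≤ M i j) (hMcol : ∀ j, ∑ i, |M i j| = 1)
    (hN : ∀ j, ∑ i, |N i j| ≤ ε)
    (hX : ∀ i j, 0 ≤ X i j)
    (hfeas : ∀ j, ∑ i, |((M + N) - (M + N) * X) i j| ≤ ρ * ε) :
    (∀ j, ∑ i, |X i j| ≤ 1 + ε * ((ρ + 2) / (1 - ε))) ∧
    (∀ j, ∑ i, |(M - M * X) i j| ≤ ε * ((ρ + 2) / (1 - ε))) := by
  have h1ε : (0:ℝ) < 1 - ε := by linarith
  set D := ε * ((ρ + 2) / (1 - ε)) with hD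
  have hDeq : D * (1 - ε) = ε * (ρ + 2) := by
    rw [hD]; field_simp
  have key : ∀ j, (∑ i, |X i j| ≤ 1 + D) ∧ (∑ i, |(M - M * X) i j| ≤ D) := by
    intro j
    have hXabs : (∑ i, |X i j|) = ∑ i, X i j := by
      refine Finset.sum_congr rfl fun i _ => abs_of_nonneg (hX i j)
    set s := ∑ i, X i j with hs
    have hs0 : 0 ≤ s := Finset.sum_nonneg fun i _ => hX i j
    -- bound on ∑ |(N*X) i j|
    have hNX : ∑ i, |(N * X) i j| ≤ ε * s := by
      calc ∑ i, |(N * X) i j|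
          ≤ ∑ i, ∑ k, |N i k| * X k j := by
            refine Finset.sum_le_sum fun i _ => ?_
            rw [Matrix.mul_apply]
            refine (Finset.abs_sum_le_sum_abs _ _).trans ?_
            refine Finset.sum_le_sum fun k _ => ?_
            rw [abs_mul, abs_of_nonneg (hX k j)]
        _ = ∑ k, (∑ i, |N i k|) * X k j := by
            rw [Finset.sum_comm]
            simp [Finset.sum_mul]
        _ ≤ ∑ k, ε * X k j := by
            refine Finset.sum_le_sum fun k _ => ?_
            exact mul_le_mul_of_nonneg_right (hN k) (hX k j)
        _ = ε * s := by rw [hs, Finset.mul_sum]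
    -- fact A
    have hA : ∑ i, |(M - M * X) i j| ≤ ρ * ε + ε + ε * s := by
      have hdecomp : ∀ i, (M - M * X) i j =
          ((M + N) - (M + N) * X) i j - N i j + (N * X) i j := by
        intro i
        simp only [Matrix.sub_apply, Matrix.add_apply, Matrix.mul_apply,
          Matrix.add_mul, Finset.sum_add_distrib]
        ring
      calc ∑ i, |(M - M * X) i j|
          ≤ ∑ i, (|((M + N) - (M + N) * X) i j| + |N i j| + |(N * X) i j|) := by
            refine Finset.sum_le_sum fun i _ => ?_
            rw [hdecomp i]
            calc |((M + N) - (M + N) * X) i j - N i j + (N * X) i j|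
                ≤ |((M + N) - (M + N) * X) i j - N i j| + |(N * X) i j| := abs_add_le _ _
              _ ≤ |((M + N) - (M + N) * X) i j| + |N i j| + |(N * X) i j| := by
                  have := abs_sub (((M + N) - (M + N) * X) i j) (N i j)
                  linarith
        _ = (∑ i, |((M + N) - (M + N) * X) i j|) + (∑ i, |N i j|)
              + ∑ i, |(N * X) i j| := by
            simp [Finset.sum_add_distrib]
        _ ≤ ρ * ε + ε + ε * s := by
            have := hfeas j
            have := hN j
            linarith
    -- fact B : s ≤ 1 + ∑ |(M - M*X) i j|
    have hMX : ∑ i, (M * X) i j = s := by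
      calc ∑ i, (M * X) i j = ∑ i, ∑ k, M i k * X k j := by
            simp [Matrix.mul_apply]
        _ = ∑ k, (∑ i, M i k) * X k j := by
            rw [Finset.sum_comm]; simp [Finset.sum_mul]
        _ = ∑ k, X k j := by
            refine Finset.sum_congr rfl fun k _ => ?_
            have : ∑ i, M i k = 1 := by
              rw [← hMcol k]
              exact Finset.sum_congr rfl fun i _ => (abs_of_nonneg (hM0 i k)).symm
            rw [this, one_mul]
        _ = s := hs.symm
    have hB : s ≤ 1 + ∑ i, |(M - M * X) i j| := by
      have h1 : s - 1 = ∑ i, ((M * X) i j - M i j) := by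
        have hM1 : ∑ i, M i j = 1 := by
          rw [← hMcol j]
          exact Finset.sum_congr rfl fun i _ => (abs_of_nonneg (hM0 i j)).symm
        rw [Finset.sum_sub_distrib, hMX, hM1]
      have h2 : ∑ i, ((M * X) i j - M i j) ≤ ∑ i, |(M - M * X) i j| := by
        refine Finset.sum_le_sum fun i _ => ?_
        have : (M * X) i j - M i j = -((M - M * X) i j) := by
          simp [Matrix.sub_apply]
        rw [this]
        exact (neg_le_abs _)
      linarith
    -- combine
    have hsle : s ≤ 1 + D := by
      have h3 : s * (1 - ε) ≤ 1 + ε * (ρ + 1) := by nlinarith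
      have h4 : (1 + D) * (1 - ε) = 1 + ε * (ρ + 1) := by
        have := hDeq; nlinarith
      nlinarith
    constructor
    · rw [hXabs]; exact hsle
    · have h5 : ε * s ≤ ε * (1 + D) := mul_le_mul_of_nonneg_left hsle hε0
      nlinarith [hDeq]
  exact ⟨fun j => (key j).1, fun j => (key j).2⟩
end

section
/- Let M̃ = M + N where M = WH is r-separable with columns of M summing to one, W is κ-robustly conical, the entries of H' (the non-identity part of H) are at most β < 1, and ‖N‖_1 ≤ ε < 1. Let X be any nonnegative matrix with X(i,j) ≤ X(i,i) ≤ 1 for all i,j and ‖M̃ − M̃X‖_1 ≤ ρε. Then for every index j such that M(:,j) = W(:,k) for some k, one has X(j,j) ≥ 1 − (2ε/(κ(1−β)))·((ρ+2)/(1−ε)). -/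
set_option maxHeartbeats 1000000 in
/-- Lemma 2: In the separable model `M = WH` with `H = [I_r, H']Π`
(encoded via an embedding `K` marking the identity columns of `H`, all other
columns of `H` having entries at most `β < 1`), columns of `W` and `H` summing
to one, `W` `κ`-robustly conical, `‖N‖₁ ≤ ε < 1`, any matrix `X ≥ 0` with
`X(i,j) ≤ X(i,i) ≤ 1` and `‖M̃ − M̃X‖₁ ≤ ρε` (where `M̃ = M + N`) satisfies
`X(j,j) ≥ 1 − (2ε/(κ(1−β)))·((ρ+2)/(1−ε))` for every column `j = K k` with
`M(:,j) = W(:,k)`. -/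
theorem stmt4 {m n r : ℕ} (W : Matrix (Fin m) (Fin r) ℝ)
    (H : Matrix (Fin r) (Fin n) ℝ) (N : Matrix (Fin m) (Fin n) ℝ)
    (X : Matrix (Fin n) (Fin n) ℝ) (K : Fin r ↪ Fin n) (ε ρ κ β : ℝ)
    (hρ : 0 < ρ) (hε0 : 0 ≤ ε) (hε : ε < 1) (hβ0 : 0 ≤ β) (hβ : β < 1)
    (hκ0 : 0 < κ)
    (hW0 : ∀ i k, 0 ≤ W i k) (hH0 : ∀ k j, 0 ≤ H k j)
    (hWcol : ∀ k, ∑ i, W i k = 1) (hHcol : ∀ j, ∑ k, H k j = 1)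
    (hκ : ∀ (k : Fin r) (x : Fin r → ℝ), (∀ l, 0 ≤ x l) → x k = 0 →
      κ ≤ ∑ i, |W i k - ∑ l, W i l * x l|)
    (hId : ∀ k i, H i (K k) = if i = k then 1 else 0)
    (hβH : ∀ j, (∀ k, j ≠ K k) → ∀ i, H i j ≤ β)
    (hN : ∀ j, ∑ i, |N i j| ≤ ε)
    (hX0 : ∀ i j, 0 ≤ X i j) (hX1 : ∀ i, X i i ≤ 1)
    (hXd : ∀ i j, X i j ≤ X i i)
    (hfeas : ∀ j, ∑ i, |((W * H + N) - (W * H + N) * X) i j| ≤ ρ * ε) :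
    ∀ k, 1 - (2 * ε / (κ * (1 - β))) * ((ρ + 2) / (1 - ε)) ≤ X (K k) (K k) := by
  intro k
  set j := K k with hj
  have hε1 : (0:ℝ) < 1 - ε := by linarith
  have hβ1 : (0:ℝ) < 1 - β := by linarith
  -- κ ≤ 1
  have hκ1 : κ ≤ 1 := by
    have h := hκ k (fun _ => 0) (fun l => le_rfl) rfl
    calc κ ≤ ∑ i, |W i k - ∑ l, W i l * 0| := h
      _ = ∑ i, W i k := by
          apply Finset.sum_congr rfl; intro i _
          simp [abs_of_nonneg (hW0 i k)]
      _ = 1 := hWcol k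
  have hν : ∀ l, |∑ i, N i l| ≤ ε := fun l =>
    le_trans (Finset.abs_sum_le_sum_abs _ _) (hN l)
  -- column sums of W*H are 1
  have hMcol : ∀ l, ∑ i, (W * H) i l = 1 := by
    intro l
    calc ∑ i, (W * H) i l = ∑ i, ∑ t, W i t * H t l := by simp [Matrix.mul_apply]
      _ = ∑ t, ∑ i, W i t * H t l := Finset.sum_comm
      _ = ∑ t, (∑ i, W i t) * H t l := by simp [Finset.sum_mul]
      _ = ∑ t, H t l := by simp [hWcol]
      _ = 1 := hHcol l
  have hcolM : ∀ l, ∑ i, (W * H + N) i l = 1 + ∑ i, N i l := by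
    intro l
    simp [Matrix.add_apply, Finset.sum_add_distrib, hMcol l]
  set S := ∑ l, X l j with hS
  have hS0 : 0 ≤ S := Finset.sum_nonneg fun l _ => hX0 l j
  -- bound on S
  have hsum1 : ∑ i, ((W * H + N) * X) i j = ∑ l, (1 + ∑ i, N i l) * X l j := by
    calc ∑ i, ((W * H + N) * X) i j = ∑ i, ∑ l, (W * H + N) i l * X l j := by
          simp [Matrix.mul_apply]
      _ = ∑ l, ∑ i, (W * H + N) i l * X l j := Finset.sum_comm
      _ = ∑ l, (∑ i, (W * H + N) i l) * X l j := by simp [Finset.sum_mul]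
      _ = _ := by
          apply Finset.sum_congr rfl; intro l _; rw [hcolM l]
  have hSle : (1 - ε) * S ≤ 1 + ε + ρ * ε := by
    have h1 : ∑ i, (((W * H + N) * X) i j - (W * H + N) i j) ≤ ρ * ε := by
      calc ∑ i, (((W * H + N) * X) i j - (W * H + N) i j)
          ≤ ∑ i, |((W * H + N) - (W * H + N) * X) i j| := by
            apply Finset.sum_le_sum; intro i _
            rw [Matrix.sub_apply]
            have := neg_le_abs ((W * H + N) i j - ((W * H + N) * X) i j)
            linarith
        _ ≤ ρ * ε := hfeas j
    have h2 : ∑ i, (((W * H + N) * X) i j - (W * H + N) i j)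
        = (∑ l, (1 + ∑ i, N i l) * X l j) - (1 + ∑ i, N i j) := by
      rw [Finset.sum_sub_distrib, hsum1, hcolM j]
    have h3 : (1 - ε) * S ≤ ∑ l, (1 + ∑ i, N i l) * X l j := by
      rw [hS, Finset.mul_sum]
      apply Finset.sum_le_sum; intro l _
      have hb := abs_le.mp (hν l)
      nlinarith [hX0 l j]
    have h4 : 1 + ∑ i, N i j ≤ 1 + ε := by
      have := abs_le.mp (hν j); linarith
    linarith
  -- the vector y = H X(:,j)
  set y : Fin r → ℝ := fun t => ∑ l, H t l * X l j with hy
  have hy0 : ∀ t, 0 ≤ y t := fun t =>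
    Finset.sum_nonneg fun l _ => mul_nonneg (hH0 t l) (hX0 l j)
  -- key identity
  have hkey : ∀ i, W i k - ∑ t, W i t * y t
      = ((W * H + N) - (W * H + N) * X) i j + ((∑ l, N i l * X l j) - N i j) := by
    intro i
    have hWHj : (W * H) i j = W i k := by
      rw [Matrix.mul_apply, hj]
      simp [hId k]
    have hswap : ∑ l, (W * H) i l * X l j = ∑ t, W i t * y t := by
      calc ∑ l, (W * H) i l * X l j = ∑ l, ∑ t, W i t * H t l * X l j := by
            simp [Matrix.mul_apply, Finset.sum_mul]
        _ = ∑ t, ∑ l, W i t * H t l * X l j := Finset.sum_comm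
        _ = ∑ t, W i t * ∑ l, H t l * X l j := by simp [Finset.mul_sum, mul_assoc]
        _ = _ := rfl
    have hmulX : ((W * H + N) * X) i j
        = ∑ l, ((W * H) i l * X l j + N i l * X l j) := by
      rw [Matrix.mul_apply]
      exact Finset.sum_congr rfl fun l _ => by rw [Matrix.add_apply, add_mul]
    rw [Matrix.sub_apply, Matrix.add_apply, hmulX, Finset.sum_add_distrib, hWHj, hswap]
    ring
  -- ℓ1 bound on W e_k - W y
  have hC : ∑ i, |W i k - ∑ t, W i t * y t| ≤ ρ * ε + ε * S + ε := by
    have hb : ∀ i, |W i k - ∑ t, W i t * y t|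
        ≤ |((W * H + N) - (W * H + N) * X) i j| + (∑ l, |N i l| * X l j) + |N i j| := by
      intro i
      rw [hkey i]
      have h1 : |((W * H + N) - (W * H + N) * X) i j + ((∑ l, N i l * X l j) - N i j)|
          ≤ |((W * H + N) - (W * H + N) * X) i j| + (|∑ l, N i l * X l j| + |N i j|) := by
        calc _ ≤ |((W * H + N) - (W * H + N) * X) i j| + |(∑ l, N i l * X l j) - N i j| :=
              abs_add_le _ _
          _ ≤ _ := by
              have := abs_sub (∑ l, N i l * X l j) (N i j)
              linarith
      have h2 : |∑ l, N i l * X l j| ≤ ∑ l, |N i l| * X l j := by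
        calc |∑ l, N i l * X l j| ≤ ∑ l, |N i l * X l j| := Finset.abs_sum_le_sum_abs _ _
          _ = ∑ l, |N i l| * X l j := by
              apply Finset.sum_congr rfl; intro l _
              rw [abs_mul, abs_of_nonneg (hX0 l j)]
      linarith
    calc ∑ i, |W i k - ∑ t, W i t * y t|
        ≤ ∑ i, (|((W * H + N) - (W * H + N) * X) i j| + (∑ l, |N i l| * X l j) + |N i j|) :=
          Finset.sum_le_sum fun i _ => hb i
      _ = (∑ i, |((W * H + N) - (W * H + N) * X) i j|)
          + (∑ i, ∑ l, |N i l| * X l j) + ∑ i, |N i j| := by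
          rw [Finset.sum_add_distrib, Finset.sum_add_distrib]
      _ ≤ ρ * ε + ε * S + ε := by
          have hmid : ∑ i, ∑ l, |N i l| * X l j ≤ ε * S := by
            calc ∑ i, ∑ l, |N i l| * X l j = ∑ l, ∑ i, |N i l| * X l j :=
                  Finset.sum_comm
              _ = ∑ l, (∑ i, |N i l|) * X l j := by simp [Finset.sum_mul]
              _ ≤ ∑ l, ε * X l j :=
                  Finset.sum_le_sum fun l _ =>
                    mul_le_mul_of_nonneg_right (hN l) (hX0 l j)
              _ = ε * S := by rw [hS, Finset.mul_sum]
          have := hfeas j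
          have := hN j
          linarith
  -- robust conicality step
  have hD : κ * (1 - y k) ≤ ρ * ε + ε * S + ε := by
    rcases le_or_gt 1 (y k) with h | h
    · have h0 : 0 ≤ ρ * ε + ε * S + ε := by positivity
      nlinarith [mul_nonneg hκ0.le (by linarith : (0:ℝ) ≤ y k - 1)]
    · set x : Fin r → ℝ := fun l => if l = k then 0 else y l / (1 - y k) with hx
      have hx0 : ∀ l, 0 ≤ x l := by
        intro l
        by_cases hl : l = k
        · simp [hx, hl]
        · simp only [hx, if_neg hl]
          exact div_nonneg (hy0 l) (by linarith)
      have h1 : ∀ i, (1 - y k) * (∑ l, W i l * x l) = ∑ l, W i l * y l - W i k * y k := by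
        intro i
        rw [Finset.mul_sum]
        have hterm : ∀ l, (1 - y k) * (W i l * x l)
            = W i l * y l - (if l = k then W i k * y k else 0) := by
          intro l
          by_cases hl : l = k
          · subst hl; simp [hx]
          · simp only [hx, if_neg hl]
            have hne : (1:ℝ) - y k ≠ 0 := by linarith
            field_simp
            rw [sub_zero]
        rw [Finset.sum_congr rfl fun l _ => hterm l, Finset.sum_sub_distrib]
        simp
      have hxeq : ∀ i, W i k - ∑ t, W i t * y t
          = (1 - y k) * (W i k - ∑ l, W i l * x l) := by
        intro i
        rw [mul_sub, h1 i]; ring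
      have hκk := hκ k x hx0 (by simp [hx])
      have hlow : κ * (1 - y k) ≤ ∑ i, |W i k - ∑ t, W i t * y t| := by
        calc κ * (1 - y k) ≤ (∑ i, |W i k - ∑ l, W i l * x l|) * (1 - y k) :=
              mul_le_mul_of_nonneg_right hκk (by linarith)
          _ = ∑ i, |W i k - ∑ t, W i t * y t| := by
              rw [Finset.sum_mul]
              apply Finset.sum_congr rfl; intro i _
              rw [hxeq i, abs_mul, abs_of_nonneg (by linarith : (0:ℝ) ≤ 1 - y k)]
              ring
      linarith
  -- y k ≤ (1-β) X j j + β S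
  have hE : y k ≤ (1 - β) * X j j + β * S := by
    have h1 : ∀ l, l ≠ j → H k l * X l j ≤ β * X l j := by
      intro l hl
      by_cases hanchor : ∃ k', l = K k'
      · obtain ⟨k', rfl⟩ := hanchor
        rw [hId k' k, if_neg (fun h => hl ((hj.trans (congrArg K h)).symm))]
        simpa using mul_nonneg hβ0 (hX0 (K k') j)
      · push_neg at hanchor
        exact mul_le_mul_of_nonneg_right (hβH l hanchor k) (hX0 l j)
    have h2 : y k = X j j + ∑ l ∈ Finset.univ.erase j, H k l * X l j := by
      have := Finset.add_sum_erase Finset.univ (fun l => H k l * X l j) (Finset.mem_univ j)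
      have hkj : H k j = 1 := by rw [hj, hId k k]; simp
      calc y k = ∑ l, H k l * X l j := rfl
        _ = H k j * X j j + ∑ l ∈ Finset.univ.erase j, H k l * X l j := this.symm
        _ = _ := by rw [hkj, one_mul]
    have h3 : ∑ l ∈ Finset.univ.erase j, H k l * X l j ≤ β * (S - X j j) := by
      have hsplit := Finset.add_sum_erase Finset.univ (fun l => X l j) (Finset.mem_univ j)
      calc ∑ l ∈ Finset.univ.erase j, H k l * X l j
          ≤ ∑ l ∈ Finset.univ.erase j, β * X l j :=
            Finset.sum_le_sum fun l hl => h1 l (Finset.ne_of_mem_erase hl)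
        _ = β * ∑ l ∈ Finset.univ.erase j, X l j := by rw [Finset.mul_sum]
        _ = β * (S - X j j) := by rw [hS]; congr 1; linarith
    nlinarith [h2, h3]
  -- combine
  have hSA : (1 - ε) * S ≤ (1 - ε) + ε * (ρ + 2) := by nlinarith [hSle]
  have hD' : κ * (1 - y k) * (1 - ε) ≤ ε * (ρ + 2) := by
    nlinarith [hD, mul_nonneg hε0 hS0, mul_le_mul_of_nonneg_left hSA hε0]
  have hE' : κ * (1 - (1 - β) * X j j - β * S) * (1 - ε) ≤ ε * (ρ + 2) := by
    nlinarith [mul_le_mul_of_nonneg_left hE (mul_nonneg hκ0.le hε1.le), hD']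
  have hκβ : κ * β ≤ 1 := by nlinarith
  have t1 : κ * β * ((1 - ε) * S) ≤ κ * β * ((1 - ε) + ε * (ρ + 2)) :=
    mul_le_mul_of_nonneg_left hSA (mul_nonneg hκ0.le hβ0)
  have t2 : κ * β * (ε * (ρ + 2)) ≤ ε * (ρ + 2) :=
    mul_le_of_le_one_left (by positivity) hκβ
  have hfinal : κ * (1 - β) * (1 - ε) * (1 - X j j) ≤ 2 * (ε * (ρ + 2)) := by
    nlinarith [hE', t1, t2]
  have hpos : 0 < κ * (1 - β) * (1 - ε) := by positivity
  have hdiv : 1 - X j j ≤ 2 * ε * (ρ + 2) / (κ * (1 - β) * (1 - ε)) := by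
    rw [le_div_iff₀ hpos]
    nlinarith [hfinal]
  have heq : (2 * ε / (κ * (1 - β))) * ((ρ + 2) / (1 - ε))
      = 2 * ε * (ρ + 2) / (κ * (1 - β) * (1 - ε)) := by
    field_simp
  rw [heq]
  linarith
end

section
/- Feasibility of X in the tightness construction: with W = [ (κ/2)I_r ; (1−κ/2)e_r^T ], H = [I_r, βI_r + ((1−β)/(r−1))(e_r e_r^T − I_r)], M = WH, and the 2r×2r matrix X = [[ (1 − ρε/(κ(1−β))) I_r, 0 ],[ (ρε/(κ(1−β))) I_r, I_r ]], one has ‖M(:,j) − MX(:,j)‖_1 = ρε for all 1 ≤ j ≤ r, and X satisfies 0 ≤ X, X(i,i) ≤ 1, X(i,j) ≤ X(i,i) for all i,j, provided ε ≤ κ(1−β)/ρ. -/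
/-- The matrix `W = [ (κ/2) I_r ; (1 − κ/2) e_rᵀ ]` of the tightness
construction. -/
noncomputable def Wtight (r : ℕ) (κ : ℝ) : Matrix (Fin r ⊕ Fin 1) (Fin r) ℝ :=
  Matrix.fromRows ((κ / 2) • (1 : Matrix (Fin r) (Fin r) ℝ))
    (Matrix.of fun _ _ => 1 - κ / 2)

/-- The matrix `H = [ I_r , β I_r + ((1−β)/(r−1))(e_r e_rᵀ − I_r) ]` of the
tightness construction. -/
noncomputable def Htight (r : ℕ) (β : ℝ) : Matrix (Fin r) (Fin r ⊕ Fin r) ℝ :=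
  Matrix.fromCols 1
    (Matrix.of fun i j => if i = j then β else (1 - β) / ((r : ℝ) - 1))

/-- The feasible candidate
`X = [[ (1 − ρε/(κ(1−β))) I_r , 0 ],[ (ρε/(κ(1−β))) I_r , I_r ]]`. -/
noncomputable def Xtight (r : ℕ) (κ β ρ ε : ℝ) :
    Matrix (Fin r ⊕ Fin r) (Fin r ⊕ Fin r) ℝ :=
  Matrix.of fun i j =>
    match i, j with
    | Sum.inl k, Sum.inl k' => if k = k' then 1 - ρ * ε / (κ * (1 - β)) else 0
    | Sum.inr k, Sum.inl k' => if k = k' then ρ * ε / (κ * (1 - β)) else 0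
    | Sum.inl _, Sum.inr _ => 0
    | Sum.inr k, Sum.inr k' => if k = k' then (1 : ℝ) else 0

lemma ite_sum_aux {r : ℕ} (j : Fin r) (a b : ℝ) :
    ∑ x : Fin r, (if x = j then a else b) = a + ((r:ℝ) - 1) * b := by
  have h : ∀ x : Fin r, (if x = j then a else b) = b + (if x = j then a - b else 0) := by
    intro x; split <;> ring
  simp only [h, Finset.sum_add_distrib, Finset.sum_const, Finset.card_univ,
    Fintype.card_fin, Finset.sum_ite_eq', Finset.mem_univ, if_true, nsmul_eq_mul]
  ring

section aux
variable {r : ℕ} (κ β : ℝ)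

lemma M1 (j k : Fin r) :
    (Wtight r κ * Htight r β) (Sum.inl k) (Sum.inl j) = if k = j then κ/2 else 0 := by
  simp [Wtight, Htight, Matrix.mul_apply, Matrix.fromRows_apply_inl, Matrix.fromRows_apply_inr, Matrix.fromCols_apply_inl, Matrix.fromCols_apply_inr,
    Matrix.one_apply, Finset.sum_ite_eq', mul_ite]

lemma M2 (j : Fin r) (k : Fin 1) :
    (Wtight r κ * Htight r β) (Sum.inr k) (Sum.inl j) = 1 - κ/2 := by
  simp [Wtight, Htight, Matrix.mul_apply, Matrix.fromRows_apply_inl, Matrix.fromRows_apply_inr, Matrix.fromCols_apply_inl, Matrix.fromCols_apply_inr,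
    Matrix.one_apply, Finset.sum_ite_eq', mul_ite]

lemma M3 (j k : Fin r) :
    (Wtight r κ * Htight r β) (Sum.inl k) (Sum.inr j) =
      (κ/2) * (if k = j then β else (1 - β) / ((r : ℝ) - 1)) := by
  simp only [Wtight, Htight, Matrix.mul_apply, Matrix.fromRows_apply_inl, Matrix.fromRows_apply_inr, Matrix.fromCols_apply_inl, Matrix.fromCols_apply_inr,
    Matrix.of_apply, Sum.elim_inl, Sum.elim_inr, Matrix.smul_apply, Matrix.one_apply,
    smul_eq_mul, mul_ite, mul_one, mul_zero, ite_mul, zero_mul]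
  rw [Finset.sum_eq_single k]
  · simp
  · intro x _ hx; simp [Ne.symm hx]
  · simp

lemma M4 (hr : 2 ≤ r) (j : Fin r) (k : Fin 1) :
    (Wtight r κ * Htight r β) (Sum.inr k) (Sum.inr j) = 1 - κ/2 := by
  have hr1 : (r:ℝ) - 1 ≠ 0 := by
    have : (2:ℝ) ≤ r := by exact_mod_cast hr
    linarith
  simp only [Wtight, Htight, Matrix.mul_apply, Matrix.fromRows_apply_inl, Matrix.fromRows_apply_inr, Matrix.fromCols_apply_inl, Matrix.fromCols_apply_inr,
    Matrix.of_apply, Sum.elim_inl, Sum.elim_inr, ← Finset.mul_sum]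
  rw [ite_sum_aux j]
  field_simp
  ring

lemma MXcol (ρ ε : ℝ) (j : Fin r) (i : Fin r ⊕ Fin 1) :
    ((Wtight r κ * Htight r β) * Xtight r κ β ρ ε) i (Sum.inl j) =
      (Wtight r κ * Htight r β) i (Sum.inl j) * (1 - ρ * ε / (κ * (1 - β))) +
      (Wtight r κ * Htight r β) i (Sum.inr j) * (ρ * ε / (κ * (1 - β))) := by
  rw [Matrix.mul_apply, Fintype.sum_sum_type]
  simp [Xtight, mul_ite, Finset.sum_ite_eq']
end aux

/-- Feasibility of `X` in the tightness construction: with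
`M = WH` as above and `ε ≤ κ(1−β)/ρ`, one has `‖M(:,j) − MX(:,j)‖₁ = ρε` for
the first `r` columns, and `X` satisfies `0 ≤ X`, `X(i,i) ≤ 1`,
`X(i,j) ≤ X(i,i)`. -/
theorem stmt8 {r : ℕ} (hr : 2 ≤ r) (κ β ρ ε : ℝ)
    (hκ0 : 0 < κ) (hκ1 : κ ≤ 1) (hβl : ((r : ℝ))⁻¹ ≤ β) (hβ : β < 1)
    (hρ : 0 < ρ) (hε0 : 0 ≤ ε) (hεub : ε ≤ κ * (1 - β) / ρ) :
    (∀ j : Fin r,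
      ∑ i, |(Wtight r κ * Htight r β) i (Sum.inl j) -
        ((Wtight r κ * Htight r β) * Xtight r κ β ρ ε) i (Sum.inl j)| = ρ * ε) ∧
    (∀ i j, 0 ≤ Xtight r κ β ρ ε i j) ∧
    (∀ i, Xtight r κ β ρ ε i i ≤ 1) ∧
    (∀ i j, Xtight r κ β ρ ε i j ≤ Xtight r κ β ρ ε i i) := by
  have hβ' : 0 < 1 - β := by linarith
  have hden : 0 < κ * (1 - β) := mul_pos hκ0 hβ'
  have hr1 : (0:ℝ) < (r:ℝ) - 1 := by
    have : (2:ℝ) ≤ r := by exact_mod_cast hr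
    linarith
  set t : ℝ := ρ * ε / (κ * (1 - β)) with ht
  have ht0 : 0 ≤ t := div_nonneg (mul_nonneg hρ.le hε0) hden.le
  have ht1 : t ≤ 1 := by
    rw [div_le_one hden]
    calc ρ * ε ≤ ρ * (κ * (1 - β) / ρ) := mul_le_mul_of_nonneg_left hεub hρ.le
      _ = κ * (1 - β) := by rw [mul_div_cancel₀ _ hρ.ne']
  refine ⟨?_, ?_, ?_, ?_⟩
  · intro j
    rw [Fintype.sum_sum_type]
    have h2 : ∀ k : Fin 1,
        |(Wtight r κ * Htight r β) (Sum.inr k) (Sum.inl j) -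
          ((Wtight r κ * Htight r β) * Xtight r κ β ρ ε) (Sum.inr k) (Sum.inl j)| = 0 := by
      intro k
      rw [MXcol, M2, M4 κ β hr]
      simp; ring
    have h1 : ∀ k : Fin r,
        |(Wtight r κ * Htight r β) (Sum.inl k) (Sum.inl j) -
          ((Wtight r κ * Htight r β) * Xtight r κ β ρ ε) (Sum.inl k) (Sum.inl j)| =
        if k = j then t * (κ/2) * (1 - β) else t * (κ/2) * ((1 - β) / ((r:ℝ) - 1)) := by
      intro k
      rw [MXcol, M1, M3, ← ht]
      split
      · rw [abs_of_nonneg]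
        · ring
        · nlinarith [mul_nonneg ht0 hβ'.le]
      · rw [abs_of_nonpos]
        · ring
        · have h0 : 0 ≤ (1 - β) / ((r:ℝ) - 1) := div_nonneg hβ'.le hr1.le
          nlinarith [mul_nonneg ht0 h0]
    simp only [h1, h2, Finset.sum_const, Finset.card_univ, Fintype.card_fin, smul_zero,
      add_zero]
    rw [ite_sum_aux j]
    have : t * (κ/2) * (1 - β) + ((r:ℝ) - 1) * (t * (κ/2) * ((1 - β) / ((r:ℝ) - 1)))
        = t * (κ * (1 - β)) := by
      field_simp
      ring
    rw [this, ht, div_mul_cancel₀ _ hden.ne']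
  · rintro (k|k) (k'|k') <;> simp only [Xtight, Matrix.of_apply] <;>
      (try rw [← ht]) <;> first | (split <;> linarith) | linarith
  · rintro (k|k) <;> simp only [Xtight, Matrix.of_apply, eq_self_iff_true, if_true] <;>
      (try rw [← ht]) <;> linarith
  · rintro (k|k) (k'|k') <;> simp only [Xtight, Matrix.of_apply, eq_self_iff_true, if_true] <;>
      (try rw [← ht]) <;> first | (split <;> linarith) | linarith
end

section
/- If M = WH is r-separable with columns of M and H summing to one, M̃ = M + N with ‖N‖_1 ≤ ε, and X^0 is the canonical separable solution (the matrix with X^0 = Π^{-1}[[I_r,H'],[0,0]]Π, so that M = MX^0 and ‖X^0‖_1 = 1), then ‖M̃ − M̃X^0‖_1 ≤ 2ε; consequently any optimal solution X* of the LP min e^T diag(X) over the feasible set {X ≥ 0 : ‖M̃ − M̃X‖_1 ≤ 2ε, X(i,j) ≤ X(i,i) ≤ 1} satisfies tr(X*) ≤ r. -/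
/-- Feasible set of the LP: `X ≥ 0`, `‖A − AX‖₁ ≤ τ` (max column ℓ1 norm),
`X(i,i) ≤ 1` and `X(i,j) ≤ X(i,i)`. -/
def FeasLP {m' n' : Type*} [Fintype m'] [Fintype n'] (A : Matrix m' n' ℝ)
    (τ : ℝ) (X : Matrix n' n' ℝ) : Prop :=
  (∀ i j, 0 ≤ X i j) ∧ (∀ i, X i i ≤ 1) ∧ (∀ i j, X i j ≤ X i i) ∧
    ∀ j, ∑ i, |(A - A * X) i j| ≤ τ

/-- If `M = WH` is `r`-separable with the columns of `M` and `H`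
summing to one, `M̃ = M + N` with `‖N‖₁ ≤ ε`, and `X⁰` is the canonical
separable solution (`M = MX⁰`, `‖X⁰‖₁ = 1`, `X⁰(i,j) ≤ X⁰(i,i) ≤ 1`,
`tr(X⁰) = r`), then `‖M̃ − M̃X⁰‖₁ ≤ 2ε`; consequently any optimal solution `X*`
of the LP `min tr(X)` over the feasible set with tolerance `2ε` satisfies
`tr(X*) ≤ r`. -/
theorem stmt9 {m n r : ℕ} (W : Matrix (Fin m) (Fin r) ℝ)
    (H : Matrix (Fin r) (Fin n) ℝ) (N : Matrix (Fin m) (Fin n) ℝ)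
    (X0 : Matrix (Fin n) (Fin n) ℝ) (ε : ℝ) (hε : 0 ≤ ε)
    (M : Matrix (Fin m) (Fin n) ℝ) (hM : M = W * H)
    (hW0 : ∀ i k, 0 ≤ W i k) (hH0 : ∀ k j, 0 ≤ H k j)
    (hMcol : ∀ j, ∑ i, M i j = 1) (hHcol : ∀ j, ∑ k, H k j = 1)
    (hMX0 : M = M * X0)
    (hX00 : ∀ i j, 0 ≤ X0 i j) (hX0col : ∀ j, ∑ i, |X0 i j| = 1)
    (hX0d : ∀ i j, X0 i j ≤ X0 i i) (hX01 : ∀ i, X0 i i ≤ 1)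
    (htr : ∑ i, X0 i i = (r : ℝ))
    (hN : ∀ j, ∑ i, |N i j| ≤ ε) :
    (∀ j, ∑ i, |((M + N) - (M + N) * X0) i j| ≤ 2 * ε) ∧
    ∀ Xs : Matrix (Fin n) (Fin n) ℝ, FeasLP (M + N) (2 * ε) Xs →
      (∀ X, FeasLP (M + N) (2 * ε) X → ∑ i, Xs i i ≤ ∑ i, X i i) →
      ∑ i, Xs i i ≤ (r : ℝ) := by
  have key : ∀ j, ∑ i, |((M + N) - (M + N) * X0) i j| ≤ 2 * ε := by
    intro j
    have hdiff : ((M + N) - (M + N) * X0) = N - N * X0 := by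
      have : (M + N) * X0 = M * X0 + N * X0 := Matrix.add_mul M N X0
      rw [this, ← hMX0]; abel
    rw [hdiff]
    have h1 : ∀ i, |(N - N * X0) i j| ≤ |N i j| + ∑ k, |N i k| * X0 k j := by
      intro i
      have : (N - N * X0) i j = N i j - ∑ k, N i k * X0 k j := by
        simp [Matrix.sub_apply, Matrix.mul_apply]
      rw [this]
      calc |N i j - ∑ k, N i k * X0 k j| ≤ |N i j| + |∑ k, N i k * X0 k j| :=
            abs_sub _ _
        _ ≤ |N i j| + ∑ k, |N i k * X0 k j| := by
            gcongr; exact Finset.abs_sum_le_sum_abs _ _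
        _ = |N i j| + ∑ k, |N i k| * X0 k j := by
            congr 1; refine Finset.sum_congr rfl fun k _ => ?_
            rw [abs_mul, abs_of_nonneg (hX00 k j)]
    calc ∑ i, |(N - N * X0) i j| ≤ ∑ i, (|N i j| + ∑ k, |N i k| * X0 k j) := by
          exact Finset.sum_le_sum fun i _ => h1 i
      _ = (∑ i, |N i j|) + ∑ k, (∑ i, |N i k|) * X0 k j := by
          rw [Finset.sum_add_distrib, Finset.sum_comm]
          simp [Finset.sum_mul]
      _ ≤ ε + ∑ k, ε * X0 k j := by
          gcongr with k
          · exact hN j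
          · exact hX00 k j
          · exact hN k
      _ = ε + ε * ∑ k, X0 k j := by rw [Finset.mul_sum]
      _ = ε + ε * 1 := by
          congr 2
          have := hX0col j
          rwa [Finset.sum_congr rfl fun k _ => abs_of_nonneg (hX00 k j)] at this
      _ = 2 * ε := by ring
  refine ⟨key, fun Xs _ hopt => ?_⟩
  have hfeas : FeasLP (M + N) (2 * ε) X0 := ⟨hX00, hX01, hX0d, key⟩
  calc ∑ i, Xs i i ≤ ∑ i, X0 i i := hopt X0 hfeas
    _ = (r : ℝ) := htr
end

section
/- Noiseless case with duplicates: Let M = WH be r-separable with columns summing to one, W κ-robustly conical with κ > 0, and let X be any optimal solution of the LP min p^T diag(X) subject to X ≥ 0, MX = M, X(i,j) ≤ X(i,i) ≤ 1, where p has positive distinct entries. For each k ∈ {1,…,r}, letting K_k = { j : M(:,j) = W(:,k) }, one has Σ_{j ∈ K_k} X(j,j) = 1, and the weight is concentrated on a single index: there is exactly one j ∈ K_k with X(j,j) = 1 (the one minimizing p over K_k), and X(j,j) = 0 for all other j in K_k. -/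
open scoped Classical

lemma uniq_rep {m r : ℕ} (W : Matrix (Fin m) (Fin r) ℝ) (κ : ℝ) (hκ0 : 0 < κ)
    (hκ : ∀ (k : Fin r) (x : Fin r → ℝ), (∀ l, 0 ≤ x l) → x k = 0 →
      κ ≤ ∑ i, |W i k - ∑ l, W i l * x l|)
    (k : Fin r) (x : Fin r → ℝ) (hx0 : ∀ l, 0 ≤ x l) (hxs : ∑ l, x l = 1)
    (hWx : ∀ i, ∑ l, W i l * x l = W i k) :
    ∀ l, x l = if l = k then 1 else 0 := by
  have hxk1 : x k = 1 := by
    by_contra hne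
    have hle : x k ≤ 1 := by
      rw [← hxs]
      exact Finset.single_le_sum (fun l _ => hx0 l) (Finset.mem_univ k)
    have hlt : x k < 1 := lt_of_le_of_ne hle hne
    set t : ℝ := 1 - x k with ht
    have ht0 : 0 < t := by simp only [ht]; linarith
    set y : Fin r → ℝ := fun l => if l = k then 0 else x l / t with hy
    have hy0 : ∀ l, 0 ≤ y l := by
      intro l
      simp only [hy]
      split
      · exact le_refl 0
      · exact div_nonneg (hx0 l) ht0.le
    have hcon := hκ k y hy0 (by simp [hy])
    have hzero : ∀ i : Fin m, W i k - ∑ l, W i l * y l = 0 := by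
      intro i
      have h1 : ∑ l ∈ Finset.univ.erase k, W i l * x l + W i k * x k = W i k := by
        have := Finset.sum_erase_add Finset.univ (fun l => W i l * x l) (Finset.mem_univ k)
        rw [hWx i] at this
        exact this
      have h1' : ∑ l ∈ Finset.univ.erase k, W i l * x l = W i k * t := by
        rw [ht]; nlinarith [h1]
      have h2 : ∑ l, W i l * y l = ∑ l ∈ Finset.univ.erase k, W i l * y l := by
        rw [← Finset.sum_erase_add Finset.univ (fun l => W i l * y l) (Finset.mem_univ k)]
        simp [hy]
      have h3 : ∑ l ∈ Finset.univ.erase k, W i l * y l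
          = (∑ l ∈ Finset.univ.erase k, W i l * x l) / t := by
        rw [Finset.sum_div]
        refine Finset.sum_congr rfl (fun l hl => ?_)
        have hlk : l ≠ k := (Finset.mem_erase.mp hl).1
        simp only [hy, if_neg hlk]
        ring
      rw [h2, h3, h1']
      field_simp
      ring
    have hzs : (∑ i, |W i k - ∑ l, W i l * y l|) = 0 := by
      apply Finset.sum_eq_zero
      intro i _
      rw [hzero i, abs_zero]
    rw [hzs] at hcon
    linarith
  intro l
  by_cases hl : l = k
  · simp [hl, hxk1]
  · simp only [if_neg hl]
    have hsum0 : ∑ j ∈ Finset.univ.erase k, x j = 0 := by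
      have := Finset.sum_erase_add Finset.univ x (Finset.mem_univ k)
      rw [hxs] at this; linarith [this, hxk1]
    exact (Finset.sum_eq_zero_iff_of_nonneg (fun j _ => hx0 j)).mp hsum0 l
      (Finset.mem_erase.mpr ⟨hl, Finset.mem_univ l⟩)

/-- noiseless case with duplicates: Let `M = WH` be
`r`-separable with columns summing to one and `W` `κ`-robustly conical with
`κ > 0`. For any optimal solution `X` of `min pᵀ diag X` subject to `X ≥ 0`,
`MX = M`, `X(i,j) ≤ X(i,i) ≤ 1` (with `p` positive and distinct), and for each
`k`, over the cluster `K_k = { j : M(:,j) = W(:,k) }` the diagonal weight sums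
to one and is concentrated on the single index of `K_k` minimizing `p`. -/
theorem stmt10 {m n r : ℕ} (W : Matrix (Fin m) (Fin r) ℝ)
    (H : Matrix (Fin r) (Fin n) ℝ) (X : Matrix (Fin n) (Fin n) ℝ)
    (p : Fin n → ℝ) (κ : ℝ) (hκ0 : 0 < κ)
    (M : Matrix (Fin m) (Fin n) ℝ) (hM : M = W * H)
    (hp : ∀ i, 0 < p i) (hpdist : Function.Injective p)
    (hW0 : ∀ i k, 0 ≤ W i k) (hH0 : ∀ k j, 0 ≤ H k j)
    (hWcol : ∀ k, ∑ i, W i k = 1) (hHcol : ∀ j, ∑ k, H k j = 1)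
    (hκ : ∀ (k : Fin r) (x : Fin r → ℝ), (∀ l, 0 ≤ x l) → x k = 0 →
      κ ≤ ∑ i, |W i k - ∑ l, W i l * x l|)
    (hsep : ∀ k : Fin r, ∃ j, ∀ i, M i j = W i k)
    (hfeas : (∀ i j, 0 ≤ X i j) ∧ (∀ i, X i i ≤ 1) ∧ (∀ i j, X i j ≤ X i i) ∧
      M * X = M)
    (hopt : ∀ X' : Matrix (Fin n) (Fin n) ℝ,
      ((∀ i j, 0 ≤ X' i j) ∧ (∀ i, X' i i ≤ 1) ∧ (∀ i j, X' i j ≤ X' i i) ∧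
        M * X' = M) → ∑ i, p i * X i i ≤ ∑ i, p i * X' i i) :
    ∀ k : Fin r,
      (∑ j, if (∀ i, M i j = W i k) then X j j else 0) = 1 ∧
      ∃ j, (∀ i, M i j = W i k) ∧ X j j = 1 ∧
        (∀ j', (∀ i, M i j' = W i k) → p j ≤ p j') ∧
        (∀ j', (∀ i, M i j' = W i k) → j' ≠ j → X j' j' = 0) := by
  obtain ⟨hX0, hXd1, hXod, hMX⟩ := hfeas
  -- M entries
  have hMent : ∀ i j, M i j = ∑ l, W i l * H l j := by
    intro i j; rw [hM, Matrix.mul_apply]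
  -- column sums of M are 1
  have hMcol : ∀ j, ∑ i, M i j = 1 := by
    intro j
    simp only [hMent]
    rw [Finset.sum_comm]
    calc ∑ l, ∑ i, W i l * H l j = ∑ l : Fin r, H l j := by
          refine Finset.sum_congr rfl (fun l _ => ?_)
          rw [← Finset.sum_mul, hWcol l, one_mul]
      _ = 1 := hHcol j
  -- the clusters
  set S : Fin r → Finset (Fin n) :=
    fun k => Finset.univ.filter (fun j => ∀ i, M i j = W i k) with hS
  have hSmem : ∀ k j, j ∈ S k ↔ ∀ i, M i j = W i k := by
    intro k j; simp [hS]
  -- characterization of H columns on clusters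
  have hchar : ∀ k j, j ∈ S k → ∀ l, H l j = if l = k then 1 else 0 := by
    intro k j hj
    exact uniq_rep W κ hκ0 hκ k (fun l => H l j) (fun l => hH0 l j) (hHcol j)
      (fun i => by rw [← hMent i j]; exact (hSmem k j).mp hj i)
  -- converse from H k j = 1
  have hback : ∀ k j, H k j = 1 → j ∈ S k := by
    intro k j h1
    rw [hSmem]
    intro i
    have hz : ∀ l ∈ Finset.univ.erase k, H l j = 0 := by
      have hs0 : ∑ l ∈ Finset.univ.erase k, H l j = 0 := by
        have h2 : ∑ l ∈ Finset.univ.erase k, H l j + H k j = 1 := by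
          rw [← hHcol j]
          exact Finset.sum_erase_add Finset.univ (fun l => H l j) (Finset.mem_univ k)
        linarith
      exact fun l hl => (Finset.sum_eq_zero_iff_of_nonneg
        (fun l _ => hH0 l j)).mp hs0 l hl
    rw [hMent]
    rw [← Finset.sum_erase_add Finset.univ (fun l => W i l * H l j) (Finset.mem_univ k)]
    rw [Finset.sum_eq_zero (fun l hl => by rw [hz l hl, mul_zero]), h1]
    ring
  have hHle1 : ∀ k j, H k j ≤ 1 := by
    intro k j
    rw [← hHcol j]
    exact Finset.single_le_sum (fun l _ => hH0 l j) (Finset.mem_univ k)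
  -- clusters are pairwise disjoint
  have hdisj : ∀ k k' : Fin r, k ≠ k' → ∀ j, j ∈ S k → j ∈ S k' → False := by
    intro k k' hne j hk hk'
    have h1 := hchar k j hk k'
    have h2 := hchar k' j hk' k'
    rw [if_neg (Ne.symm hne)] at h1
    rw [if_pos rfl] at h2
    rw [h1] at h2; norm_num at h2
  -- choose the p-minimizer of each cluster
  have hmin : ∀ k : Fin r, ∃ j, j ∈ S k ∧ ∀ j' ∈ S k, p j ≤ p j' := by
    intro k
    obtain ⟨j, hj⟩ := hsep k
    exact Finset.exists_min_image (S k) p ⟨j, (hSmem k j).mpr hj⟩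
  choose js hjsmem hjsmin using hmin
  have hjsinj : Function.Injective js := by
    intro k k' h
    by_contra hne
    exact hdisj k k' hne (js k) (hjsmem k) (h ▸ hjsmem k')
  -- cluster diagonal sums are ≥ 1
  have hclsum : ∀ k, (1:ℝ) ≤ ∑ j ∈ S k, X j j := by
    intro k
    set j0 := js k with hj0
    -- column j0 of X sums to 1
    have hcol1 : ∑ t, X t j0 = 1 := by
      have h1 : ∑ i, ∑ t, M i t * X t j0 = 1 := by
        calc ∑ i, ∑ t, M i t * X t j0 = ∑ i, M i j0 := by
              refine Finset.sum_congr rfl (fun i _ => ?_)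
              rw [← Matrix.mul_apply, hMX]
          _ = 1 := hMcol j0
      rw [Finset.sum_comm] at h1
      calc ∑ t, X t j0 = ∑ t, ∑ i, M i t * X t j0 := by
            refine Finset.sum_congr rfl (fun t _ => ?_)
            rw [← Finset.sum_mul, hMcol t, one_mul]
        _ = 1 := h1
    -- representation coefficient vector
    have hrep := uniq_rep W κ hκ0 hκ k (fun l => ∑ t, H l t * X t j0)
      (fun l => Finset.sum_nonneg (fun t _ => mul_nonneg (hH0 l t) (hX0 t j0)))
      (by rw [Finset.sum_comm]
          calc ∑ t, ∑ l, H l t * X t j0 = ∑ t, X t j0 := by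
                refine Finset.sum_congr rfl (fun t _ => ?_)
                rw [← Finset.sum_mul, hHcol t, one_mul]
            _ = 1 := hcol1)
      (by intro i
          calc ∑ l, W i l * ∑ t, H l t * X t j0
              = ∑ t, (∑ l, W i l * H l t) * X t j0 := by
                simp only [Finset.mul_sum, Finset.sum_mul]
                rw [Finset.sum_comm]
                exact Finset.sum_congr rfl (fun t _ =>
                  Finset.sum_congr rfl (fun l _ => by ring))
            _ = ∑ t, M i t * X t j0 := by
                refine Finset.sum_congr rfl (fun t _ => by rw [← hMent])
            _ = W i k := by
                rw [← Matrix.mul_apply, hMX]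
                exact (hSmem k j0).mp (hjsmem k) i)
    have hk1 : ∑ t, H k t * X t j0 = 1 := by
      have := hrep k; simpa using this
    -- off-cluster entries of column j0 vanish
    have hoff : ∀ t, t ∉ S k → X t j0 = 0 := by
      intro t ht
      have hs0 : ∑ t, (1 - H k t) * X t j0 = 0 := by
        have : ∑ t, (1 - H k t) * X t j0 = (∑ t, X t j0) - ∑ t, H k t * X t j0 := by
          rw [← Finset.sum_sub_distrib]
          exact Finset.sum_congr rfl (fun t _ => by ring)
        rw [this, hcol1, hk1]; ring
      have hterm := (Finset.sum_eq_zero_iff_of_nonneg (fun t _ =>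
        mul_nonneg (by linarith [hHle1 k t]) (hX0 t j0))).mp hs0 t (Finset.mem_univ t)
      have hHlt : H k t ≠ 1 := fun h => ht (hback k t h)
      have : (1 : ℝ) - H k t ≠ 0 := fun h => hHlt (by linarith)
      exact (mul_eq_zero.mp hterm).resolve_left this
    have hsub : ∑ t ∈ S k, X t j0 = 1 := by
      rw [← hcol1]
      exact Finset.sum_subset (Finset.subset_univ _) (fun t _ ht => hoff t ht)
    calc (1:ℝ) = ∑ t ∈ S k, X t j0 := hsub.symm
      _ ≤ ∑ t ∈ S k, X t t := Finset.sum_le_sum (fun t _ => hXod t j0)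
  -- the competitor X'
  set X' : Matrix (Fin n) (Fin n) ℝ :=
    fun i j => ∑ l, if i = js l then H l j else 0 with hX'
  have hX'ent : ∀ k j, X' (js k) j = H k j := by
    intro k j
    show (∑ l, if js k = js l then H l j else 0) = H k j
    rw [Finset.sum_eq_single_of_mem k (Finset.mem_univ k) (fun l _ hl =>
      if_neg (fun h => hl (hjsinj h).symm))]
    rw [if_pos rfl]
  have hX'diag1 : ∀ k, X' (js k) (js k) = 1 := by
    intro k
    rw [hX'ent k (js k)]
    have := hchar k (js k) (hjsmem k) k
    simpa using this
  have hX'zero : ∀ i, (∀ l, i ≠ js l) → ∀ j, X' i j = 0 := by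
    intro i hi j
    show (∑ l, if i = js l then H l j else 0) = 0
    exact Finset.sum_eq_zero (fun l _ => if_neg (hi l))
  have hX'feas : (∀ i j, 0 ≤ X' i j) ∧ (∀ i, X' i i ≤ 1) ∧ (∀ i j, X' i j ≤ X' i i) ∧
      M * X' = M := by
    refine ⟨?_, ?_, ?_, ?_⟩
    · intro i j
      show (0:ℝ) ≤ ∑ l, if i = js l then H l j else 0
      exact Finset.sum_nonneg (fun l _ => by
        split
        · exact hH0 _ _
        · exact le_refl 0)
    · intro i
      by_cases hi : ∃ l, i = js l
      · obtain ⟨l, rfl⟩ := hi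
        rw [hX'diag1 l]
      · push_neg at hi
        rw [hX'zero i hi i]; norm_num
    · intro i j
      by_cases hi : ∃ l, i = js l
      · obtain ⟨l, rfl⟩ := hi
        rw [hX'ent l j, hX'diag1 l]
        exact hHle1 l j
      · push_neg at hi
        rw [hX'zero i hi i, hX'zero i hi j]
    · ext i j
      rw [Matrix.mul_apply]
      calc ∑ t, M i t * X' t j = ∑ t, ∑ l, if t = js l then M i t * H l j else 0 := by
            refine Finset.sum_congr rfl (fun t _ => ?_)
            show M i t * (∑ l, if t = js l then H l j else 0) = _
            rw [Finset.mul_sum]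
            exact Finset.sum_congr rfl (fun l _ => by rw [mul_ite, mul_zero])
        _ = ∑ l, ∑ t, if t = js l then M i t * H l j else 0 := Finset.sum_comm
        _ = ∑ l, M i (js l) * H l j := by
            refine Finset.sum_congr rfl (fun l _ => ?_)
            exact (Finset.sum_ite_eq' Finset.univ (js l)
              (fun t => M i t * H l j)).trans (if_pos (Finset.mem_univ _))
        _ = ∑ l, W i l * H l j := by
            refine Finset.sum_congr rfl (fun l _ => ?_)
            rw [(hSmem l (js l)).mp (hjsmem l) i]
        _ = M i j := (hMent i j).symm
  -- objective of X'
  have hobjX' : ∑ i, p i * X' i i = ∑ k, p (js k) := by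
    calc ∑ i, p i * X' i i = ∑ i, ∑ l, if i = js l then p i * H l i else 0 := by
          refine Finset.sum_congr rfl (fun i _ => ?_)
          show p i * (∑ l, if i = js l then H l i else 0) = _
          rw [Finset.mul_sum]
          exact Finset.sum_congr rfl (fun l _ => by rw [mul_ite, mul_zero])
      _ = ∑ l, ∑ i, if i = js l then p i * H l i else 0 := Finset.sum_comm
      _ = ∑ l, p (js l) * H l (js l) := by
          refine Finset.sum_congr rfl (fun l _ => ?_)
          exact (Finset.sum_ite_eq' Finset.univ (js l)
            (fun i => p i * H l i)).trans (if_pos (Finset.mem_univ _))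
      _ = ∑ l, p (js l) := by
          refine Finset.sum_congr rfl (fun l _ => ?_)
          have := hchar l (js l) (hjsmem l) l
          simp at this
          rw [this, mul_one]
  -- inequality chain
  have hA : ∑ k, p (js k) ≤ ∑ k, ∑ j ∈ S k, p (js k) * X j j := by
    refine Finset.sum_le_sum (fun k _ => ?_)
    rw [← Finset.mul_sum]
    nth_rewrite 1 [show p (js k) = p (js k) * 1 by ring]
    exact mul_le_mul_of_nonneg_left (hclsum k) (hp (js k)).le
  have hB : ∑ k, ∑ j ∈ S k, p (js k) * X j j ≤ ∑ k, ∑ j ∈ S k, p j * X j j := by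
    refine Finset.sum_le_sum (fun k _ => Finset.sum_le_sum (fun j hj => ?_))
    exact mul_le_mul_of_nonneg_right (hjsmin k j hj) (hX0 j j)
  have hC : ∑ k, ∑ j ∈ S k, p j * X j j ≤ ∑ j, p j * X j j := by
    rw [← Finset.sum_biUnion (fun k _ k' _ hne =>
      Finset.disjoint_left.mpr (fun j hk hk' => hdisj k k' hne j hk hk'))]
    exact Finset.sum_le_sum_of_subset_of_nonneg (Finset.subset_univ _)
      (fun j _ _ => mul_nonneg (hp j).le (hX0 j j))
  have hD : ∑ j, p j * X j j ≤ ∑ k, p (js k) := by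
    rw [← hobjX']
    exact hopt X' hX'feas
  -- all equalities
  have hEq1 : ∑ k, ∑ j ∈ S k, p (js k) * X j j = ∑ k, p (js k) := le_antisymm (by linarith) hA
  have hEq2 : ∑ k, ∑ j ∈ S k, p j * X j j = ∑ k, ∑ j ∈ S k, p (js k) * X j j :=
    le_antisymm (by linarith) hB
  -- cluster sums are exactly 1
  have hcl1 : ∀ k, ∑ j ∈ S k, X j j = 1 := by
    intro k
    have hz : ∑ k, p (js k) * ((∑ j ∈ S k, X j j) - 1) = 0 := by
      have : ∑ k, p (js k) * ((∑ j ∈ S k, X j j) - 1)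
          = (∑ k, ∑ j ∈ S k, p (js k) * X j j) - ∑ k, p (js k) := by
        rw [← Finset.sum_sub_distrib]
        refine Finset.sum_congr rfl (fun k _ => ?_)
        rw [mul_sub, mul_one, Finset.mul_sum]
      rw [this, hEq1]; ring
    have hterm := (Finset.sum_eq_zero_iff_of_nonneg (fun k _ =>
      mul_nonneg (hp (js k)).le (by linarith [hclsum k]))).mp hz k (Finset.mem_univ k)
    have := (mul_eq_zero.mp hterm).resolve_left (ne_of_gt (hp (js k)))
    linarith
  -- each non-minimizer diagonal vanishes
  have hvanish : ∀ k, ∀ j ∈ S k, j ≠ js k → X j j = 0 := by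
    intro k j hj hne
    have hz : ∑ k, ∑ j ∈ S k, (p j - p (js k)) * X j j = 0 := by
      have : ∑ k, ∑ j ∈ S k, (p j - p (js k)) * X j j
          = (∑ k, ∑ j ∈ S k, p j * X j j) - ∑ k, ∑ j ∈ S k, p (js k) * X j j := by
        rw [← Finset.sum_sub_distrib]
        refine Finset.sum_congr rfl (fun k _ => ?_)
        rw [← Finset.sum_sub_distrib]
        exact Finset.sum_congr rfl (fun j _ => by ring)
      rw [this, hEq2]; ring
    have hnn : ∀ k' ∈ Finset.univ, ∀ j' ∈ S k', 0 ≤ (p j' - p (js k')) * X j' j' :=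
      fun k' _ j' hj' => mul_nonneg (by linarith [hjsmin k' j' hj']) (hX0 j' j')
    have hinner : ∑ j ∈ S k, (p j - p (js k)) * X j j = 0 := by
      have := (Finset.sum_eq_zero_iff_of_nonneg (fun k' _ =>
        Finset.sum_nonneg (hnn k' (Finset.mem_univ k')))).mp hz k (Finset.mem_univ k)
      exact this
    have hterm := (Finset.sum_eq_zero_iff_of_nonneg
      (hnn k (Finset.mem_univ k))).mp hinner j hj
    have hpne : p j - p (js k) ≠ 0 := by
      intro h
      exact hne (hpdist (by linarith))
    exact (mul_eq_zero.mp hterm).resolve_left hpne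
  -- conclusion
  intro k
  constructor
  · rw [← Finset.sum_filter]
    exact hcl1 k
  · refine ⟨js k, (hSmem k (js k)).mp (hjsmem k), ?_, ?_, ?_⟩
    · have := hcl1 k
      rw [Finset.sum_eq_single_of_mem (js k) (hjsmem k)
        (fun j hj hne => hvanish k j hj hne)] at this
      exact this
    · exact fun j' hj' => hjsmin k j' ((hSmem k j').mpr hj')
    · exact fun j' hj' hne => hvanish k j' ((hSmem k j').mpr hj') hne
end

section
/- Outlier diagonal lower bound: Let M̃ = M + N with M = [T, W, WH'] (columns summing to one), ‖N‖_1 ≤ ε < 1, and suppose the combined matrix [W,T] is κ-robustly conical. If X is feasible for the LP with ρ = 2 (i.e., X ≥ 0, ‖M̃ − M̃X‖_1 ≤ 2ε, X(i,j) ≤ X(i,i) ≤ 1), then for each outlier index 1 ≤ k ≤ t, X(k,k) ≥ 1 − 4ε/(κ(1−ε)). -/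
/-- outlier diagonal lower bound: Let `M̃ = M + N` with
`M = [T, W, WH']` (columns summing to one), `‖N‖₁ ≤ ε < 1`, and suppose the
combined matrix `[W, T]` is `κ`-robustly conical. If `X` is feasible for the
LP with `ρ = 2`, then each outlier diagonal entry satisfies
`X(k,k) ≥ 1 − 4ε/(κ(1−ε))`. -/
theorem stmt14 {m t r s : ℕ} (T : Matrix (Fin m) (Fin t) ℝ)
    (W : Matrix (Fin m) (Fin r) ℝ) (H' : Matrix (Fin r) (Fin s) ℝ)
    (N : Matrix (Fin m) (Fin t ⊕ (Fin r ⊕ Fin s)) ℝ)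
    (X : Matrix (Fin t ⊕ (Fin r ⊕ Fin s)) (Fin t ⊕ (Fin r ⊕ Fin s)) ℝ)
    (κ ε : ℝ) (hκ0 : 0 < κ) (hε0 : 0 ≤ ε) (hε : ε < 1)
    (hT0 : ∀ i k, 0 ≤ T i k) (hW0 : ∀ i k, 0 ≤ W i k) (hH'0 : ∀ k j, 0 ≤ H' k j)
    (hTcol : ∀ k, ∑ i, T i k = 1) (hWcol : ∀ k, ∑ i, W i k = 1)
    (hH'col : ∀ j, ∑ k, H' k j = 1)
    (hκ : ∀ (k : Fin r ⊕ Fin t) (x : Fin r ⊕ Fin t → ℝ),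
      (∀ l, 0 ≤ x l) → x k = 0 →
      κ ≤ ∑ i, |Matrix.fromCols W T i k -
        ∑ l, Matrix.fromCols W T i l * x l|)
    (hN : ∀ j, ∑ i, |N i j| ≤ ε)
    (hfeas : FeasLP (Matrix.fromCols T (Matrix.fromCols W (W * H')) + N)
      (2 * ε) X) :
    ∀ k : Fin t, 1 - 4 * ε / (κ * (1 - ε)) ≤ X (Sum.inl k) (Sum.inl k) := by
  intro k
  obtain ⟨hX0, hX1, hXd, hXτ⟩ := hfeas
  set M : Matrix (Fin m) (Fin t ⊕ (Fin r ⊕ Fin s)) ℝ :=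
    Matrix.fromCols T (Matrix.fromCols W (W * H')) with hMdef
  have hε1 : (0:ℝ) < 1 - ε := by linarith
  have hMcol : ∀ l, ∑ i, M i l = 1 := by
    rintro (a | a | b)
    · simpa [M] using hTcol a
    · simpa [M] using hWcol a
    · simp only [M, Matrix.fromCols_apply_inr, Sum.elim_inr, Matrix.mul_apply]
      rw [Finset.sum_comm]
      simp only [← Finset.sum_mul, hWcol, one_mul]
      exact hH'col b
  have hnl : ∀ l, |∑ i, N i l| ≤ ε := fun l =>
    (Finset.abs_sum_le_sum_abs _ _).trans (hN l)
  -- Step 1: column sums of X are bounded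
  have hσ : ∀ jj, ∑ l, X l jj ≤ (1 + 3*ε)/(1-ε) := by
    intro jj
    have h1 : |∑ i, ((M + N) - (M + N) * X) i jj| ≤ 2*ε :=
      (Finset.abs_sum_le_sum_abs _ _).trans (hXτ jj)
    have h2 : ∑ i, ((M + N) - (M + N) * X) i jj
        = (1 + ∑ i, N i jj) - ∑ l, (1 + ∑ i, N i l) * X l jj := by
      simp only [Matrix.sub_apply, Matrix.add_apply, Matrix.mul_apply]
      rw [Finset.sum_sub_distrib, Finset.sum_add_distrib, hMcol jj,
        Finset.sum_comm]
      congr 1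
      refine Finset.sum_congr rfl fun l _ => ?_
      rw [← Finset.sum_mul, Finset.sum_add_distrib, hMcol l]
    have h3 : ∑ l, X l jj - ε * ∑ l, X l jj ≤ ∑ l, (1 + ∑ i, N i l) * X l jj := by
      rw [Finset.mul_sum, ← Finset.sum_sub_distrib]
      refine Finset.sum_le_sum fun l _ => ?_
      have := abs_le.mp (hnl l)
      nlinarith [hX0 l jj]
    have h4 := (abs_le.mp h1).1
    rw [h2] at h4
    have h5 := (abs_le.mp (hnl jj)).2
    rw [le_div_iff₀ hε1]
    nlinarith
  -- Step 2: noiseless residual bound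
  have hMX : ∀ jj, ∑ i, |(M - M * X) i jj| ≤ 4*ε/(1-ε) := by
    intro jj
    have key : ∀ i, (M - M*X) i jj
        = ((M+N) - (M+N)*X) i jj - N i jj + ∑ l, N i l * X l jj := by
      intro i
      simp only [Matrix.sub_apply, Matrix.add_apply, Matrix.mul_apply, add_mul,
        Finset.sum_add_distrib]
      ring
    have step : ∑ i, |(M - M*X) i jj|
        ≤ ∑ i, (|((M+N)-(M+N)*X) i jj| + |N i jj| + ∑ l, |N i l| * X l jj) := by
      refine Finset.sum_le_sum fun i _ => ?_
      rw [key i]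
      refine (abs_add_le _ _).trans (add_le_add ((abs_sub _ _).trans le_rfl) ?_)
      refine (Finset.abs_sum_le_sum_abs _ _).trans ?_
      refine Finset.sum_le_sum fun l _ => ?_
      rw [abs_mul, abs_of_nonneg (hX0 l jj)]
    have s1 : ∑ i, |((M+N)-(M+N)*X) i jj| ≤ 2*ε := hXτ jj
    have s2 : ∑ i, |N i jj| ≤ ε := hN jj
    have s3 : ∑ i, ∑ l, |N i l| * X l jj ≤ ε * ((1 + 3*ε)/(1-ε)) := by
      rw [Finset.sum_comm]
      calc ∑ l, ∑ i, |N i l| * X l jj = ∑ l, (∑ i, |N i l|) * X l jj := by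
            simp [Finset.sum_mul]
        _ ≤ ∑ l, ε * X l jj :=
            Finset.sum_le_sum fun l _ => mul_le_mul_of_nonneg_right (hN l) (hX0 l jj)
        _ = ε * ∑ l, X l jj := by rw [Finset.mul_sum]
        _ ≤ ε * ((1 + 3*ε)/(1-ε)) := mul_le_mul_of_nonneg_left (hσ jj) hε0
    have : 2*ε + ε + ε * ((1 + 3*ε)/(1-ε)) = 4*ε/(1-ε) := by
      field_simp
      ring
    rw [Finset.sum_add_distrib, Finset.sum_add_distrib] at step
    linarith
  -- Step 3: robust conicality
  set j : Fin t ⊕ (Fin r ⊕ Fin s) := Sum.inl k with hjdef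
  set α : ℝ := 1 - X j j with hαdef
  rcases le_or_gt α 0 with hα0 | hα0
  · have : 0 ≤ 4*ε/(κ*(1-ε)) := by positivity
    simp only [hαdef] at hα0
    linarith
  set c : Fin r ⊕ Fin t → ℝ := Sum.elim
    (fun a => X (Sum.inr (Sum.inl a)) j + ∑ b, H' a b * X (Sum.inr (Sum.inr b)) j)
    (fun a => if a = k then 0 else X (Sum.inl a) j) with hcdef
  have hc0 : ∀ l, 0 ≤ c l := by
    rintro (a | a)
    · exact add_nonneg (hX0 _ _) (Finset.sum_nonneg fun b _ =>
        mul_nonneg (hH'0 a b) (hX0 _ _))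
    · simp only [hcdef, Sum.elim_inr]
      split
      · exact le_rfl
      · exact hX0 _ _
  have hck : c (Sum.inr k) = 0 := by simp [hcdef]
  have hkey : ∀ i, (M - M*X) i j
      = α * T i k - ∑ l, Matrix.fromCols W T i l * c l := by
    intro i
    have e1 : (M*X) i j
        = ∑ a, T i a * X (Sum.inl a) j
          + (∑ a, W i a * X (Sum.inr (Sum.inl a)) j
            + ∑ b, (W*H') i b * X (Sum.inr (Sum.inr b)) j) := by
      simp [M, Matrix.mul_apply, Fintype.sum_sum_type]
    have e2 : ∑ l, Matrix.fromCols W T i l * c l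
        = (∑ a, W i a * c (Sum.inl a)) + ∑ a, T i a * c (Sum.inr a) := by
      simp [Fintype.sum_sum_type]
    have e3 : ∑ a, T i a * c (Sum.inr a)
        = ∑ a, T i a * X (Sum.inl a) j - T i k * X j j := by
      simp only [hcdef, Sum.elim_inr]
      have he : ∀ a : Fin t, T i a * (if a = k then 0 else X (Sum.inl a) j)
          = T i a * X (Sum.inl a) j - (if a = k then T i k * X j j else 0) := by
        intro a; by_cases h : a = k <;> simp [h, hjdef]
      rw [Finset.sum_congr rfl fun a _ => he a, Finset.sum_sub_distrib]
      simp
    have e4 : ∑ a, W i a * c (Sum.inl a)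
        = ∑ a, W i a * X (Sum.inr (Sum.inl a)) j
          + ∑ b, (W*H') i b * X (Sum.inr (Sum.inr b)) j := by
      simp only [hcdef, Sum.elim_inl, mul_add, Finset.sum_add_distrib]
      congr 1
      simp only [Finset.mul_sum]
      rw [Finset.sum_comm]
      refine Finset.sum_congr rfl fun b _ => ?_
      rw [Matrix.mul_apply, Finset.sum_mul]
      refine Finset.sum_congr rfl fun a _ => ?_
      ring
    have e5 : M i j = T i k := by simp [M, hjdef]
    simp only [Matrix.sub_apply, e5, e1, e2, e3, e4, hαdef]
    ring
  have hx0 : ∀ l, 0 ≤ c l / α := fun l => div_nonneg (hc0 l) hα0.le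
  have hκ' := hκ (Sum.inr k) (fun l => c l / α) hx0 (by simp [hck])
  have hsum : ∑ i, |(M - M*X) i j|
      = α * ∑ i, |Matrix.fromCols W T i (Sum.inr k)
        - ∑ l, Matrix.fromCols W T i l * (c l / α)| := by
    rw [Finset.mul_sum]
    refine Finset.sum_congr rfl fun i _ => ?_
    have hstep : Matrix.fromCols W T i (Sum.inr k)
        - ∑ l, Matrix.fromCols W T i l * (c l / α)
        = (M - M*X) i j / α := by
      have hd : α * T i k / α = T i k := by field_simp
      rw [hkey i, sub_div, Finset.sum_div, hd]
      simp [Matrix.fromCols_apply_inr, mul_div_assoc]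
    rw [hstep, abs_div, abs_of_pos hα0, mul_div_cancel₀ _ hα0.ne']
  have hfinal : α * κ ≤ 4*ε/(1-ε) := by
    calc α * κ ≤ α * ∑ i, |Matrix.fromCols W T i (Sum.inr k)
          - ∑ l, Matrix.fromCols W T i l * (c l / α)| :=
        mul_le_mul_of_nonneg_left hκ' hα0.le
      _ = ∑ i, |(M - M*X) i j| := hsum.symm
      _ ≤ 4*ε/(1-ε) := hMX j
  have h6 : α ≤ 4*ε/(κ*(1-ε)) := by
    rw [le_div_iff₀ (by positivity)]
    rw [le_div_iff₀ hε1] at hfinal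
    nlinarith
  simp only [hαdef] at h6
  linarith
end
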